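/- If x = E diag(s_E) a s_x with (E diag(s_E) a)ᵀ v ≠ 0 and s_x > 0, then proj(x) is a point in the convex hull of the perspective projections of the scaled endmembers e_k (s_E)_k (for those k with a_k > 0 and (e_k)ᵀv (s_E)_k > 0), i.e., projected 2LMM data lie on a simplex spanned by the projected scaled endmembers. -/

import Mathlib

theorem stmt5 (P K : ℕ) (v : Fin P → ℝ) (E : Matrix (Fin P) (Fin K) ℝ)
    (sE : Fin K → ℝ) (hsE : ∀ k, 0 < sE k)
    (hEv : ∀ k, 0 < dotProduct (fun p => E p k) v)
    (a : Fin K → ℝ) (ha : a ∈ stdSimplex ℝ (Fin K))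
    (sx : ℝ) (hsx : 0 < sx)
    (x : Fin P → ℝ) (hx : x = sx • E.mulVec (fun k => sE k * a k))
    (hdot : dotProduct (E.mulVec (fun k => sE k * a k)) v ≠ 0)
    (proj : (Fin P → ℝ) → (Fin P → ℝ))
    (hproj : ∀ y, proj y = (dotProduct y v)⁻¹ • y) :
    ∃ lam : Fin K → ℝ, (∀ k, 0 ≤ lam k) ∧ (∑ k, lam k = 1) ∧
      proj x = ∑ k, lam k • proj (sE k • fun p => E p k) := by
  set d : Fin K → ℝ := fun k => dotProduct (fun p => E p k) v with hd
  set D : ℝ := dotProduct (E.mulVec (fun k => sE k * a k)) v with hD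
  have hDsum : D = ∑ k, sE k * a k * d k := by
    simp only [hD, hd, dotProduct, Matrix.mulVec, Finset.sum_mul]
    rw [Finset.sum_comm]
    exact Finset.sum_congr rfl fun k _ => by
      rw [Finset.mul_sum]; exact Finset.sum_congr rfl fun p _ => by ring
  have hDnn : 0 ≤ D := by
    rw [hDsum]
    exact Finset.sum_nonneg fun k _ =>
      mul_nonneg (mul_nonneg (hsE k).le (ha.1 k)) (hEv k).le
  have hDpos : 0 < D := lt_of_le_of_ne hDnn (Ne.symm hdot)
  refine ⟨fun k => sE k * a k * d k / D, fun k => div_nonneg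
    (mul_nonneg (mul_nonneg (hsE k).le (ha.1 k)) (hEv k).le) hDnn, ?_, ?_⟩
  · rw [← Finset.sum_div, ← hDsum, div_self hDpos.ne']
  · have hxv : dotProduct x v = sx * D := by
      rw [hx, smul_dotProduct, smul_eq_mul, hD]
    have hcol : ∀ k, dotProduct (sE k • fun p => E p k) v = sE k * d k := by
      intro k; rw [smul_dotProduct, smul_eq_mul, hd]
    rw [hproj x, hxv]
    funext p
    have : (∑ k, (sE k * a k * d k / D) • proj (sE k • fun p => E p k)) p
        = ∑ k, (sE k * a k * d k / D) * ((sE k * (d k))⁻¹ * (sE k * E p k)) := by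
      rw [Finset.sum_apply]
      exact Finset.sum_congr rfl fun k _ => by
        rw [hproj, hcol k]; simp [mul_assoc]
    rw [this, Finset.sum_congr rfl (fun k _ =>
      show sE k * a k * d k / D * ((sE k * d k)⁻¹ * (sE k * E p k))
          = D⁻¹ * (E p k * (sE k * a k)) by
        have hdk : d k ≠ 0 := (hEv k).ne'
        have hsk : sE k ≠ 0 := (hsE k).ne'
        field_simp), ← Finset.mul_sum]
    simp only [Pi.smul_apply, hx, Matrix.mulVec, dotProduct, smul_eq_mul]
    rw [mul_inv]
    field_simp
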